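/- arXiv:math/0611403 — 2 statements merged into one kernel-verified Lean document; each statement's English description precedes it below -/
import Mathlib

section
/- Let G be a non-trivial finite p-group. If every element of G has order at most 3 and G contains no subgroup isomorphic to C_p × C_p, then G is isomorphic to C_2 or C_3. -/
/-!
An element of order `p` forces `p ≤ 3`, so every element has order `< p ^ 2`. If `|G| ≥ p ^ 2`,
a subgroup of order `p ^ 2` is abelian of exponent `p`, i.e. a 2-dimensional `𝔽_p`-vector space,
hence `C_p × C_p`. So `|G| = p` with `p ∈ {2, 3}`.
-/

theorem Nat.dvd_prime_of_dvd_prime_sq_of_lt {p m : ℕ} (hp : p.Prime) (hdvd : m ∣ p ^ 2)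
    (hlt : m < p ^ 2) : m ∣ p := by
  obtain ⟨i, -, rfl⟩ := (Nat.dvd_prime_pow hp).mp hdvd
  have hi : i < 2 := (Nat.pow_lt_pow_iff_right hp.one_lt).mp hlt
  simpa using Nat.pow_dvd_pow p (Nat.le_of_lt_succ hi)

section ElementaryAbelian

variable {p : ℕ} [Fact p.Prime]

theorem nonempty_linearEquiv_prod_of_card_eq_sq {V : Type*} [AddCommGroup V] [Module (ZMod p) V]
    (hcard : Nat.card V = p ^ 2) : Nonempty (V ≃ₗ[ZMod p] ZMod p × ZMod p) := by
  have : Finite V := Nat.finite_of_card_ne_zero (by simp [hcard, (Fact.out : p.Prime).ne_zero])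
  have : Module.Finite (ZMod p) V := Module.Finite.of_finite
  have hrank : Module.finrank (ZMod p) V = Module.finrank (ZMod p) (ZMod p × ZMod p) := by
    rw [Module.finrank_prod, Module.finrank_self]
    apply Nat.pow_right_injective (Fact.out : p.Prime).two_le
    simpa [Module.natCard_eq_pow_finrank (K := ZMod p)] using hcard
  exact ⟨LinearEquiv.ofFinrankEq _ _ hrank⟩

theorem nonempty_mulEquiv_prod_zmod_of_card_eq_sq {H : Type*} [CommGroup H]
    (hcard : Nat.card H = p ^ 2) (hexp : ∀ x : H, x ^ p = 1) :
    Nonempty (H ≃* Multiplicative (ZMod p) × Multiplicative (ZMod p)) := by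
  let _ : Module (ZMod p) (Additive H) := AddCommGroup.zmodModule hexp
  obtain ⟨e⟩ := nonempty_linearEquiv_prod_of_card_eq_sq (V := Additive H) hcard
  exact ⟨(AddEquiv.toMultiplicative e.toAddEquiv : H ≃* Multiplicative (ZMod p × ZMod p)).trans
    (MulEquiv.prodMultiplicative _ _)⟩

theorem exists_subgroup_mulEquiv_prod_zmod {G : Type*} [Group G] {n : ℕ}
    (hG : Nat.card G = p ^ n) (hn : 2 ≤ n) (hord : ∀ g : G, orderOf g < p ^ 2) :
    ∃ H : Subgroup G, Nonempty (H ≃* Multiplicative (ZMod p) × Multiplicative (ZMod p)) := by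
  have : Finite G := Nat.finite_of_card_ne_zero (by simp [hG, (Fact.out : p.Prime).ne_zero])
  obtain ⟨H, hH⟩ := Sylow.exists_subgroup_card_pow_prime p (hG ▸ pow_dvd_pow p hn)
  let _ : CommGroup H := IsPGroup.commGroupOfCardEqPrimeSq hH
  have hexp (x : H) : x ^ p = 1 := by
    apply orderOf_dvd_iff_pow_eq_one.mp
    refine Nat.dvd_prime_of_dvd_prime_sq_of_lt Fact.out (hH ▸ orderOf_dvd_natCard x) ?_
    simpa only [Subgroup.orderOf_coe] using hord x
  exact ⟨H, nonempty_mulEquiv_prod_zmod_of_card_eq_sq hH hexp⟩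

end ElementaryAbelian

/-- A non-trivial finite `p`-group all of whose elements have order at most 3 and which has
no subgroup isomorphic to `C_p × C_p` is isomorphic to `C₂` or `C₃`. -/
theorem stmt_1 (p n : ℕ) (hp : p.Prime) (hn : 1 ≤ n) (G : Type*) [Group G]
    (hG : Nat.card G = p ^ n)
    (hord : ∀ g : G, orderOf g ≤ 3)
    (hpp : ¬ ∃ H : Subgroup G,
      Nonempty (H ≃* Multiplicative (ZMod p) × Multiplicative (ZMod p))) :
    Nonempty (G ≃* Multiplicative (ZMod 2)) ∨ Nonempty (G ≃* Multiplicative (ZMod 3)) := by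
  have : Fact p.Prime := ⟨hp⟩
  have : Finite G := Nat.finite_of_card_ne_zero (by simp [hG, hp.ne_zero])
  obtain ⟨g, hg⟩ := exists_prime_orderOf_dvd_card' (G := G) p (hG ▸ dvd_pow_self p (by omega))
  have hp3 : p ≤ 3 := hg ▸ hord g
  have hsmall (x : G) : orderOf x < p ^ 2 := by nlinarith [hord x, hp.two_le]
  have hn1 : n = 1 := by
    by_contra hne
    exact hpp (exists_subgroup_mulEquiv_prod_zmod hG (by omega) hsmall)
  have e : G ≃* Multiplicative (ZMod p) :=
    mulEquivOfPrimeCardEq (by rw [hG, hn1, pow_one]) (by simp)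
  obtain rfl | rfl : p = 2 ∨ p = 3 := by have := hp.two_le; omega
  · exact .inl ⟨e⟩
  · exact .inr ⟨e⟩
end

section
/- Let k be a field of characteristic p and G a cyclic group of order n ≥ 4 with n a power of p, with generator σ. Let M = kG/((σ−1)^2 · kG) be the cyclic kG-module of length two. Then multiplication by (σ − 1) on M is a non-zero map that does not factor through the projective module kG. -/
/-!
In characteristic `p` and for `n = p ^ m` we have `X ^ n - 1 = (X - 1) ^ n`, so `σ ↦ X`
identifies `kG` with `k[X] ⧸ ((X - 1) ^ n)` (a surjection between spaces of the same
dimension `n`).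
For `t = σ - 1` the annihilator of `t²` is therefore `t ^ (n - 2) kG ⊆ t² kG` as `n ≥ 4`,
while `t ∉ t² kG`. Any `a : M → kG` sends `1` into the annihilator of `t²`, so if
`b ∘ a` were multiplication by `t`, then `t ≡ b (a 1) = a 1 • b 1 ≡ 0` modulo `t²`.
-/

open Polynomial

theorem dvd_of_mk_eq_comp_apply_one {R : Type*} [CommRing R] {s t : R}
    (hann : ∀ x, s * x = 0 → s ∣ x)
    (a : (R ⧸ Ideal.span {s}) →ₗ[R] R) (b : R →ₗ[R] R ⧸ Ideal.span {s})
    (hab : b (a 1) = Ideal.Quotient.mk _ t) : s ∣ t := by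
  have hsa : s * a 1 = 0 := by
    rw [← smul_eq_mul, ← map_smul, Algebra.smul_def, mul_one, Ideal.Quotient.algebraMap_eq,
      Ideal.Quotient.eq_zero_iff_mem.mpr (Ideal.mem_span_singleton_self s), map_zero]
  obtain ⟨c, hc⟩ := hann (a 1) hsa
  obtain ⟨y, hy⟩ := Ideal.Quotient.mk_surjective (b 1)
  have hba : b (a 1) = Ideal.Quotient.mk _ (s * c * y) := by
    rw [← mul_one (a 1), ← smul_eq_mul, map_smul, ← hy, hc, Algebra.smul_def,
      Ideal.Quotient.algebraMap_eq, ← map_mul]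
  rw [hab, Ideal.Quotient.eq, Ideal.mem_span_singleton] at hba
  exact (dvd_sub_right (dvd_mul_of_dvd_left (dvd_mul_right s c) y)).mp (dvd_sub_comm.mp hba)

section Presentation

variable {D R F : Type*} [CommRing D] [IsDomain D] [CommRing R] [FunLike F D R]
  [RingHomClass F D R] {ψ : F} {π : D} {n : ℕ}

theorem sq_dvd_of_sq_mul_eq_zero (hψ : Function.Surjective ψ)
    (hker : RingHom.ker ψ = Ideal.span {π ^ n}) (hπ : π ≠ 0) (hn : 4 ≤ n) {x : R}
    (hx : ψ π ^ 2 * x = 0) : ψ π ^ 2 ∣ x := by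
  obtain ⟨q, rfl⟩ := hψ x
  have hq : π ^ n ∣ π ^ 2 * q := by
    rw [← Ideal.mem_span_singleton, ← hker, RingHom.mem_ker, map_mul, map_pow, hx]
  rw [show n = 2 + (n - 2) by omega, pow_add] at hq
  have hπq : π ^ 2 ∣ q :=
    (pow_dvd_pow π (by omega : 2 ≤ n - 2)).trans
      ((mul_dvd_mul_iff_left (pow_ne_zero 2 hπ)).mp hq)
  simpa only [map_pow] using map_dvd ψ hπq

theorem not_sq_dvd_self (hψ : Function.Surjective ψ)
    (hker : RingHom.ker ψ = Ideal.span {π ^ n}) (hπ : π ≠ 0) (hπu : ¬IsUnit π)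
    (hn : 2 ≤ n) :
    ¬ ψ π ^ 2 ∣ ψ π := by
  rintro ⟨r, hr⟩
  obtain ⟨c, rfl⟩ := hψ r
  have hc : π ^ n ∣ π * (1 - π * c) := by
    rw [← Ideal.mem_span_singleton, ← hker, RingHom.mem_ker, map_mul, map_sub, map_one, map_mul,
      mul_sub, mul_one, ← mul_assoc, ← sq, ← hr, sub_self]
  rw [show n = 1 + (n - 1) by omega, pow_add, pow_one] at hc
  have h1 : π ∣ 1 - π * c :=
    (dvd_pow_self π (by omega : n - 1 ≠ 0)).trans ((mul_dvd_mul_iff_left hπ).mp hc)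
  exact hπu (isUnit_of_dvd_one ((dvd_sub_right (dvd_mul_right π c)).mp
    (dvd_sub_comm.mp h1)))

end Presentation

theorem Polynomial.ker_eq_span_of_surjective_of_finrank_eq {K A : Type*} [Field K] [CommRing A]
    [Algebra K A] (ψ : K[X] →ₐ[K] A) (hψ : Function.Surjective ψ) {f : K[X]} (hf : f.Monic)
    (hψf : ψ f = 0) (hdim : Module.finrank K A = f.natDegree) :
    RingHom.ker ψ = Ideal.span {f} := by
  have hψ_aeval (g : K[X]) : aeval (ψ X) g = ψ g := by
    rw [aeval_algHom_apply, aeval_X_left_apply]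
  let Φ := AdjoinRoot.liftAlgHom f (Algebra.ofId K A) (ψ X) ((hψ_aeval f).trans hψf)
  have hΦ (g : K[X]) : Φ (AdjoinRoot.mk f g) = ψ g := hψ_aeval g
  have hΦsurj : Function.Surjective Φ := fun x ↦
    let ⟨g, hg⟩ := hψ x; ⟨_, (hΦ g).trans hg⟩
  let pb := AdjoinRoot.powerBasis' hf
  have := pb.finite
  have := Module.Finite.of_surjective Φ.toLinearMap hΦsurj
  have hΦinj : Function.Injective Φ :=
    (LinearMap.injective_iff_surjective_of_finrank_eq_finrank
      (f := Φ.toLinearMap) (pb.finrank.trans hdim.symm)).mpr hΦsurj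
  ext g
  rw [RingHom.mem_ker, Ideal.mem_span_singleton, ← AdjoinRoot.mk_eq_zero, ← hΦ,
    ← map_zero Φ, hΦinj.eq_iff]

section CyclicGroupAlgebra

theorem ofAdd_one_pow (n j : ℕ) :
    Multiplicative.ofAdd (1 : ZMod n) ^ j = Multiplicative.ofAdd (j : ZMod n) := by
  rw [← ofAdd_nsmul, nsmul_one]

variable (k : Type*) [Field k] (n : ℕ)

theorem MonoidAlgebra.aeval_ofAdd_one_X_pow_sub_one :
    aeval (MonoidAlgebra.of k (Multiplicative (ZMod n)) (Multiplicative.ofAdd 1))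
      (X ^ n - 1 : k[X]) = 0 := by
  rw [map_sub, map_pow, aeval_X, ← map_pow, ofAdd_one_pow, ZMod.natCast_self, ofAdd_zero,
    map_one, map_one, sub_self]

variable [NeZero n]

theorem MonoidAlgebra.aeval_ofAdd_one_surjective :
    Function.Surjective
      (aeval (R := k) (MonoidAlgebra.of k (Multiplicative (ZMod n)) (Multiplicative.ofAdd 1))) := by
  intro x
  induction x using MonoidAlgebra.induction_on with
  | of g =>
    refine ⟨X ^ (Multiplicative.toAdd g).val, ?_⟩
    rw [map_pow, aeval_X, ← map_pow, ofAdd_one_pow, ZMod.natCast_zmod_val, ofAdd_toAdd]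
  | add f g hf hg =>
    obtain ⟨a, rfl⟩ := hf
    obtain ⟨b, rfl⟩ := hg
    exact ⟨a + b, map_add _ a b⟩
  | smul r f hf =>
    obtain ⟨a, rfl⟩ := hf
    exact ⟨r • a, map_smul _ r a⟩

theorem MonoidAlgebra.ker_aeval_ofAdd_one :
    RingHom.ker
        (aeval (R := k) (MonoidAlgebra.of k (Multiplicative (ZMod n)) (Multiplicative.ofAdd 1))) =
      Ideal.span {(X ^ n - 1 : k[X])} := by
  apply ker_eq_span_of_surjective_of_finrank_eq _ (aeval_ofAdd_one_surjective k n)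
    (monic_X_pow_sub_C 1 (NeZero.ne n)) (aeval_ofAdd_one_X_pow_sub_one k n)
  rw [Module.finrank_eq_card_basis (MonoidAlgebra.basis _ k), Fintype.card_multiplicative,
    ZMod.card, natDegree_X_pow_sub_C]

end CyclicGroupAlgebra

/-- Over `k` of characteristic `p` and `G` cyclic of order `n ≥ 4` a power of `p` with
generator `σ`, multiplication by `σ - 1` on the length-two cyclic module
`M = kG/((σ-1)²)` is a non-zero `kG`-module map which does not factor through the
projective module `kG`. -/
theorem stmt_9 (k : Type*) [Field k] (p n : ℕ) (hp : p.Prime) (hchar : ringChar k = p)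
    (hn : ∃ m : ℕ, n = p ^ m) (hn4 : 4 ≤ n) :
    let A := MonoidAlgebra k (Multiplicative (ZMod n))
    let σ : Multiplicative (ZMod n) := Multiplicative.ofAdd 1
    let I : Ideal A := Ideal.span {(MonoidAlgebra.of k (Multiplicative (ZMod n)) σ - 1) ^ 2}
    ∃ f : (A ⧸ I) →ₗ[A] (A ⧸ I),
      (∀ m : A ⧸ I,
        f m = Ideal.Quotient.mk I (MonoidAlgebra.of k (Multiplicative (ZMod n)) σ - 1) * m) ∧
      f ≠ 0 ∧
      ¬ ∃ (a : (A ⧸ I) →ₗ[A] A) (b : A →ₗ[A] (A ⧸ I)), f = b.comp a := by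
  intro A σ I
  have : NeZero n := ⟨by omega⟩
  have : Fact p.Prime := ⟨hp⟩
  have : CharP k p := hchar ▸ ringChar.charP k
  obtain ⟨m, rfl⟩ := hn
  set ψ := aeval (R := k) (MonoidAlgebra.of k (Multiplicative (ZMod (p ^ m))) σ)
  have hψ : Function.Surjective ψ := MonoidAlgebra.aeval_ofAdd_one_surjective k _
  have hker : RingHom.ker ψ = Ideal.span {(X - 1 : k[X]) ^ p ^ m} := by
    rw [sub_pow_char_pow, one_pow]
    exact MonoidAlgebra.ker_aeval_ofAdd_one k _
  have hψX : ψ (X - 1) = MonoidAlgebra.of k _ σ - 1 := by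
    rw [map_sub, aeval_X, map_one]
  have hX : (X - 1 : k[X]) ≠ 0 := X_sub_C_ne_zero 1
  have hXu : ¬IsUnit (X - 1 : k[X]) := not_isUnit_X_sub_C 1
  have hndvd := not_sq_dvd_self hψ hker hX hXu (by omega)
  rw [hψX] at hndvd
  refine ⟨LinearMap.mul A (A ⧸ I) (Ideal.Quotient.mk I _), fun _ ↦ rfl, ?_, ?_⟩
  · intro h0
    have := LinearMap.congr_fun h0 1
    rw [LinearMap.mul_apply', mul_one, LinearMap.zero_apply, Ideal.Quotient.eq_zero_iff_mem,
      Ideal.mem_span_singleton] at this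
    exact hndvd this
  · rintro ⟨a, b, hab⟩
    refine hndvd (dvd_of_mk_eq_comp_apply_one (fun x hx ↦ ?_) a b ?_)
    · simpa only [hψX] using sq_dvd_of_sq_mul_eq_zero hψ hker hX hn4 (x := x) (by rwa [hψX])
    · rw [← LinearMap.comp_apply, ← hab, LinearMap.mul_apply', mul_one]
end
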